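/- arXiv:2003.06916 — 2 statements merged into one kernel-verified Lean document; each statement's English description precedes it below -/
import Mathlib

section
/- If a sequence u over a finite alphabet contains an overlapping factor (i.e., there exist words x, y and a non-empty factor w of u with xw = wy a factor of u and 0 < |x| < |w|), then the critical exponent of u is strictly greater than 2. -/
/-- `w` occurs in the sequence `u` at position `i`. -/
def OccursAt {α : Type*} (u : ℕ → α) (w : List α) (i : ℕ) : Prop :=
  ∀ k < w.length, w[k]? = some (u (i + k))

/-- `w` is a factor of the sequence `u`. -/
def IsFactor {α : Type*} (u : ℕ → α) (w : List α) : Prop :=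
  ∃ i, OccursAt u w i

/-- `z` has fractional root `r`: `z` is a prefix of the periodic sequence `r^ω`. -/
def HasRoot {α : Type*} (z r : List α) : Prop :=
  r ≠ [] ∧ ∀ k < z.length, z[k]? = r[k % r.length]?

/-- The index of `w` in `u`: the supremum of exponents `|z|/|w|` over factors `z`
of `u` with fractional root `w`. -/
noncomputable def ind {α : Type*} (u : ℕ → α) (w : List α) : EReal :=
  sSup {e : EReal | ∃ z : List α, IsFactor u z ∧ HasRoot z w ∧
    e = (((z.length : ℝ) / (w.length : ℝ) : ℝ) : EReal)}

/-- The critical exponent of `u`: the supremum of indices of non-empty factors. -/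
noncomputable def critExp {α : Type*} (u : ℕ → α) : EReal :=
  sSup {e : EReal | ∃ w : List α, w ≠ [] ∧ IsFactor u w ∧ e = ind u w}

/-!
If `xw = wy` with `0 < |x| < |w|`, then `xw` has period `|x|`, i.e. it has fractional root `x`.
Hence `x` has index at least `|xw| / |x| = 1 + |w| / |x| > 2` in `u`.
-/

section

variable {α : Type*}

theorem getElem?_append_eq_sub_length_of_append_eq {x y w : List α} (hxy : x ++ w = w ++ y)
    {k : ℕ} (hk : k < (x ++ w).length) (hxk : x.length ≤ k) :
    (x ++ w)[k]? = (x ++ w)[k - x.length]? := by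
  have hk' : k - x.length < w.length := by simp at hk; omega
  rw [List.getElem?_append_right hxk, hxy, List.getElem?_append_left hk']

theorem hasRoot_append_of_append_eq {x y w : List α} (hx : x ≠ []) (hxy : x ++ w = w ++ y) :
    HasRoot (x ++ w) x := by
  refine ⟨hx, fun k hk => ?_⟩
  have hxpos : 0 < x.length := List.length_pos_iff.mpr hx
  induction k using Nat.strong_induction_on with
  | _ k ih =>
    rcases lt_or_ge k x.length with hkx | hxk
    · rw [Nat.mod_eq_of_lt hkx, List.getElem?_append_left hkx]
    · rw [getElem?_append_eq_sub_length_of_append_eq hxy hk hxk,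
        ih (k - x.length) (by omega) (by omega), ← Nat.mod_eq_sub_mod hxk]

theorem IsFactor.of_isPrefix {u : ℕ → α} {v z : List α} (hz : IsFactor u z) (hvz : v <+: z) :
    IsFactor u v := by
  obtain ⟨t, rfl⟩ := hvz
  obtain ⟨i, hi⟩ := hz
  refine ⟨i, fun k hk => ?_⟩
  rw [← hi k (by simp; omega), List.getElem?_append_left hk]

theorem le_ind_of_hasRoot {u : ℕ → α} {z r : List α} (hz : IsFactor u z) (hzr : HasRoot z r) :
    (((z.length : ℝ) / (r.length : ℝ) : ℝ) : EReal) ≤ ind u r :=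
  le_sSup ⟨z, hz, hzr, rfl⟩

theorem ind_le_critExp {u : ℕ → α} {w : List α} (hw : w ≠ []) (hwu : IsFactor u w) :
    ind u w ≤ critExp u :=
  le_sSup ⟨w, hw, hwu, rfl⟩

end

theorem critExp_gt_two_of_overlap_general {α : Type*} (u : ℕ → α)
    (x y w : List α) (hfac : IsFactor u (x ++ w))
    (hxy : x ++ w = w ++ y) (hx : 0 < x.length) (hxw : x.length < w.length) :
    (2 : EReal) < critExp u := by
  have hxne : x ≠ [] := List.length_pos_iff.mp hx
  have hexp : (2 : ℝ) < ((x ++ w).length : ℝ) / (x.length : ℝ) := by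
    rw [lt_div_iff₀ (by exact_mod_cast hx), List.length_append]
    push_cast
    linarith [(Nat.cast_lt (α := ℝ)).mpr hxw]
  calc (2 : EReal) = ((2 : ℝ) : EReal) := rfl
    _ < (((x ++ w).length : ℝ) / (x.length : ℝ) : ℝ) := EReal.coe_lt_coe_iff.mpr hexp
    _ ≤ ind u x := le_ind_of_hasRoot hfac (hasRoot_append_of_append_eq hxne hxy)
    _ ≤ critExp u := ind_le_critExp hxne (hfac.of_isPrefix (List.prefix_append x w))

/-- If a sequence over a finite alphabet has an overlapping factor, then its
critical exponent is strictly greater than `2`. -/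
theorem critExp_gt_two_of_overlap {α : Type*} [Fintype α] (u : ℕ → α)
    (x y w : List α) (hw : w ≠ []) (hfac : IsFactor u (x ++ w))
    (hxy : x ++ w = w ++ y) (hx : 0 < x.length) (hxw : x.length < w.length) :
    (2 : EReal) < critExp u :=
  critExp_gt_two_of_overlap_general u x y w hfac hxy hx hxw
end

section
/- Let φ be a morphism on words over an alphabet A, and let w be a word that is a prefix of φ(a) for every letter a ∈ A. If u is a fractional root of z (i.e., z is a prefix of u^ω), then φ(u) is a fractional root of φ(z)·w, i.e., φ(z)w is a prefix of (φ(u))^ω. -/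
/-!
Extend the prefix `z` of `u^k` to the full power `u^(k+1)`: `z ++ t = u^(k+1)` with `t ≠ []`,
because `t` ends with the nonempty word `u`. Applying `φ` gives `φ z ++ φ t = (φ u)^(k+1)`,
and `w` is a prefix of `φ t`, since `t` starts with a letter.
-/

namespace List

theorem exists_ne_nil_append_eq_flatten_replicate_succ {α : Type*} {u z : List α} {k : ℕ}
    (hu : u ≠ []) (hz : z <+: (replicate k u).flatten) :
    ∃ t, t ≠ [] ∧ z ++ t = (replicate (k + 1) u).flatten := by
  obtain ⟨s, hs⟩ := hz
  refine ⟨s ++ u, by simp [hu], ?_⟩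
  rw [replicate_succ', flatten_append, ← hs]
  simp

section AppendHom

variable {α β : Type*} {φ : List α → List β} (hφ : ∀ x y, φ (x ++ y) = φ x ++ φ y)
include hφ

theorem map_nil_of_map_append : φ [] = [] := by
  simpa using hφ [] []

theorem map_flatten_replicate_of_map_append (n : ℕ) (u : List α) :
    φ (replicate n u).flatten = (replicate n (φ u)).flatten := by
  induction n with
  | zero => exact map_nil_of_map_append hφ
  | succ n ih => simp [replicate_succ, hφ, ih]

theorem prefix_map_of_ne_nil_of_map_append {w : List β} (hw : ∀ a, w <+: φ [a]) {v : List α}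
    (hv : v ≠ []) : w <+: φ v := by
  obtain ⟨a, l, rfl⟩ := exists_cons_of_ne_nil hv
  rw [← singleton_append, hφ]
  exact (hw a).trans (prefix_append _ _)

end AppendHom

end List

/-- If `φ` is a morphism, `w` is a common prefix of all images of letters, and
`u` is a fractional root of `z` (i.e. `z` is a prefix of a power of `u`), then
`φ(u)` is a fractional root of `φ(z)·w`. -/
theorem morphism_fractional_root {α : Type*} (φ : List α → List α)
    (hφ : ∀ x y : List α, φ (x ++ y) = φ x ++ φ y)
    (w : List α) (hw : ∀ a : α, w <+: φ [a])
    (u z : List α) (hu : u ≠ [])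
    (hroot : ∃ k, z <+: (List.replicate k u).flatten) :
    ∃ k, (φ z ++ w) <+: (List.replicate k (φ u)).flatten := by
  obtain ⟨k, hk⟩ := hroot
  obtain ⟨t, ht, hzt⟩ := List.exists_ne_nil_append_eq_flatten_replicate_succ hu hk
  refine ⟨k + 1, ?_⟩
  rw [← List.map_flatten_replicate_of_map_append hφ, ← hzt, hφ]
  exact (List.prefix_append_right_inj _).mpr (List.prefix_map_of_ne_nil_of_map_append hφ hw ht)
end
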